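/- Under the setup described in the context, for all pairwise distinct w, x, y, z ∈ S'∖{e}: det(w,x,z)·g_w(y)·g_z(w)·b_{yx}(w) = det(w,x,y)·g_w(z)·g_y(w)·b_{zx}(w), where det(u,v,t) denotes the determinant of the 3×3 matrix whose rows are the fixed vector representatives of u, v, t. -/

import Mathlib

open Projectivization

abbrev Pt (F : Type) [Field F] : Type := Projectivization F (Fin 3 → F)

def IsLine (F : Type) [Field F] (W : Submodule F (Fin 3 → F)) : Prop :=
  Module.finrank F W = 2

noncomputable def secantCount (F : Type) [Field F] (S : Set (Pt F))
    (W : Submodule F (Fin 3 → F)) : ℕ :=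
  {p ∈ S | p.submodule ≤ W}.ncard

noncomputable def oddSecants (F : Type) [Field F] (S : Set (Pt F)) : ℕ :=
  {W : Submodule F (Fin 3 → F) | IsLine F W ∧ Odd (secantCount F S W)}.ncard

noncomputable def linesThroughWithCount (F : Type) [Field F] (S : Set (Pt F))
    (x : Pt F) (i : ℕ) : ℕ :=
  {W : Submodule F (Fin 3 → F) | IsLine F W ∧ x.submodule ≤ W ∧ secantCount F S W = i}.ncard

noncomputable def S43 (F : Type) [Field F] [Fintype F] (S : Set (Pt F)) : Set (Pt F) :=
  {x ∈ S | linesThroughWithCount F S x 1 = 1 ∧ linesThroughWithCount F S x 3 = 1 ∧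
    linesThroughWithCount F S x 2 = Fintype.card F - 1}

/-!
The heart of the argument is Segre's lemma of tangents. For distinct `a, b, c ∈ S'`, a point `s`
of `T = S \ {a, b, c}` lies on the line `ker det(a, b - κ(s) c, ·)` through `a`, where
`κ(s) = det(a, b, s) / det(a, c, s) ∈ Fˣ`. These lines are pairwise distinct, the tangent at `a`
is the one with parameter `f_a(b) / f_a(c)` and the 3-secant the one with parameter
`g_a(b) / g_a(c)`. As `a` lies on only one tangent and `|T| = q - 1 = |Fˣ|`, the fibres of `κ` have
`0`, `2` and `1` elements over these two parameters and over every other one, so Wilson's theorem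
gives `∏ κ = -(g_a(b) / g_a(c)) / (f_a(b) / f_a(c))`. Multiplying the three such identities for
the triangle `u, v, e` (the determinant products cancel because `q - 1` is even) and using the
normalisation of the forms at `e` gives `f_u(v) g_v(u) = -g_u(v) f_v(u)`. The theorem follows from
this and the Plücker relation `det(w,x,y) ℓ(z) = det(w,z,y) ℓ(x) + det(w,x,z) ℓ(y)` for the forms
`ℓ = f_w, g_w`, which vanish at `w`.
-/

open Finset Module

section LinearAlgebra

variable {F : Type} [Field F]

noncomputable def detForm (u v : Fin 3 → F) : Module.Dual F (Fin 3 → F) :=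
  dotProductEquiv F (Fin 3) (crossProduct u v)

lemma detForm_apply (u v w : Fin 3 → F) : detForm u v w = (Matrix.of ![u, v, w]).det := by
  rw [detForm, dotProductEquiv_apply_apply, dotProduct_comm, triple_product_permutation,
    triple_product_eq_det]
  rfl

lemma detForm_apply_left (u v : Fin 3 → F) : detForm u v u = 0 := by
  simp [detForm_apply, Matrix.det_fin_three]; ring

lemma detForm_apply_right (u v : Fin 3 → F) : detForm u v v = 0 := by
  simp [detForm_apply, Matrix.det_fin_three]; ring

lemma detForm_swap (u v w : Fin 3 → F) : detForm v u w = -detForm u v w := by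
  simp [detForm_apply, Matrix.det_fin_three]; ring

lemma prod_detForm_swap {ι : Type*} {T : Finset ι} (hT : Even #T) (u v : Fin 3 → F)
    (w : ι → Fin 3 → F) : ∏ i ∈ T, detForm v u (w i) = ∏ i ∈ T, detForm u v (w i) := by
  simp only [detForm_swap u v]
  rw [prod_neg, hT.neg_one_pow, one_mul]

lemma detForm_apply_swap (u v w : Fin 3 → F) : detForm u v w = -detForm u w v := by
  simp [detForm_apply, Matrix.det_fin_three]; ring

lemma detForm_sub_smul_apply (a b c w : Fin 3 → F) (ξ : F) :
    detForm a (b - ξ • c) w = detForm a b w - ξ * detForm a c w := by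
  simp [detForm_apply, Matrix.det_fin_three]; ring

lemma detForm_smul_eq_cramer (p q r t : Fin 3 → F) :
    detForm p q r • t = detForm t q r • p + detForm p t r • q + detForm p q t • r := by
  ext i; fin_cases i <;> simp [detForm_apply, Matrix.det_fin_three] <;> ring

lemma detForm_mul_apply_of_apply_eq_zero (φ : Module.Dual F (Fin 3 → F)) {p : Fin 3 → F}
    (hp : φ p = 0) (q r t : Fin 3 → F) :
    detForm p q r * φ t = detForm p t r * φ q + detForm p q t * φ r := by
  simpa [hp] using congrArg φ (detForm_smul_eq_cramer p q r t)

end LinearAlgebra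

section Projective

variable {K V : Type*} [DivisionRing K] [AddCommGroup V] [Module K V]

lemma Projectivization.submodule_le_ker_iff (p : Projectivization K V) (φ : V →ₗ[K] K) :
    p.submodule ≤ LinearMap.ker φ ↔ φ p.rep = 0 := by
  rw [p.submodule_eq, Submodule.span_singleton_le_iff_mem, LinearMap.mem_ker]

lemma Projectivization.linearIndependent_rep_pair {p q : Projectivization K V} (hpq : p ≠ q) :
    LinearIndependent K ![p.rep, q.rep] := by
  convert independent_iff.1 ((independent_pair_iff_ne p q).2 hpq) using 1
  ext i; fin_cases i <;> rfl

lemma Projectivization.finrank_sup_submodule {p q : Projectivization K V} (hpq : p ≠ q) :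
    finrank K ↑(p.submodule ⊔ q.submodule) = 2 := by
  rw [p.submodule_eq, q.submodule_eq, ← Submodule.span_union, Set.singleton_union,
    ← Matrix.range_cons_cons_empty, finrank_span_eq_card (linearIndependent_rep_pair hpq),
    Fintype.card_fin]

end Projective

section Lines

variable {F : Type} [Field F]

lemma finrank_ker_of_ne_zero {φ : Module.Dual F (Fin 3 → F)} (hφ : φ ≠ 0) :
    finrank F (LinearMap.ker φ) = 2 := by
  have := φ.finrank_ker_add_one_of_ne_zero hφ
  rw [finrank_fin_fun] at this
  omega

lemma isLine_ker {φ : Module.Dual F (Fin 3 → F)} (hφ : φ ≠ 0) : IsLine F (LinearMap.ker φ) :=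
  finrank_ker_of_ne_zero hφ

lemma ker_eq_sup_of_apply_eq_zero {φ : Module.Dual F (Fin 3 → F)} (hφ : φ ≠ 0) {p q : Pt F}
    (hpq : p ≠ q) (hp : φ p.rep = 0) (hq : φ q.rep = 0) :
    LinearMap.ker φ = p.submodule ⊔ q.submodule := by
  refine (Submodule.eq_of_le_of_finrank_le ?_ ?_).symm
  · exact sup_le ((submodule_le_ker_iff p φ).2 hp) ((submodule_le_ker_iff q φ).2 hq)
  · rw [finrank_ker_of_ne_zero hφ, finrank_sup_submodule hpq]

lemma detForm_ne_zero {p q : Pt F} (hpq : p ≠ q) : detForm p.rep q.rep ≠ 0 :=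
  (dotProductEquiv F (Fin 3)).map_ne_zero_iff.2
    (crossProduct_ne_zero_iff_linearIndependent.2 (linearIndependent_rep_pair hpq))

lemma ker_detForm {p q : Pt F} (hpq : p ≠ q) :
    LinearMap.ker (detForm p.rep q.rep) = p.submodule ⊔ q.submodule :=
  ker_eq_sup_of_apply_eq_zero (detForm_ne_zero hpq) hpq (detForm_apply_left _ _)
    (detForm_apply_right _ _)

end Lines

section Secants

variable {F : Type} [Field F]

lemma eq_or_eq_of_secantCount_eq_two {S : Set (Pt F)} {W : Submodule F (Fin 3 → F)}
    (h2 : secantCount F S W = 2) {a b s : Pt F} (hab : a ≠ b) (ha : a ∈ S) (hb : b ∈ S)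
    (haW : a.submodule ≤ W) (hbW : b.submodule ≤ W) (hs : s ∈ S) (hsW : s.submodule ≤ W) :
    s = a ∨ s = b := by
  obtain ⟨x, y, -, hxy⟩ := Set.ncard_eq_two.1 h2
  have mem (p : Pt F) (hp : p ∈ S) (hpW : p.submodule ≤ W) : p = x ∨ p = y := by
    simpa [hxy] using (show p ∈ {p ∈ S | p.submodule ≤ W} from ⟨hp, hpW⟩)
  rcases mem a ha haW with rfl | rfl <;> rcases mem b hb hbW with rfl | rfl <;>
    rcases mem s hs hsW with rfl | rfl <;> simp_all

lemma detForm_ne_zero_of_secantCount_eq_two {S : Set (Pt F)} {a b s : Pt F} (hab : a ≠ b)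
    (ha : a ∈ S) (hb : b ∈ S) (h2 : secantCount F S (a.submodule ⊔ b.submodule) = 2)
    (hs : s ∈ S) (hsa : s ≠ a) (hsb : s ≠ b) : detForm a.rep b.rep s.rep ≠ 0 := by
  intro h0
  have hsW : s.submodule ≤ a.submodule ⊔ b.submodule := by
    rw [← ker_detForm hab]
    exact (submodule_le_ker_iff s _).2 h0
  rcases eq_or_eq_of_secantCount_eq_two h2 hab ha hb le_sup_left le_sup_right hs hsW with
    rfl | rfl <;> contradiction

lemma apply_ne_zero_of_secantCount_ne_two {S : Set (Pt F)} {φ : Module.Dual F (Fin 3 → F)}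
    (hφ : φ ≠ 0) (hφS : secantCount F S (LinearMap.ker φ) ≠ 2) {a b : Pt F} (hab : a ≠ b)
    (ha : φ a.rep = 0) (h2 : secantCount F S (a.submodule ⊔ b.submodule) = 2) : φ b.rep ≠ 0 :=
  fun hb ↦ hφS (by rwa [ker_eq_sup_of_apply_eq_zero hφ hab ha hb])

end Secants

section Pencil

variable {F : Type} [Field F] {a b c : Fin 3 → F}

lemma detForm_sub_smul_ne_zero (hΔ : detForm a b c ≠ 0) (ξ : F) : detForm a (b - ξ • c) ≠ 0 :=
  fun h ↦ hΔ (by simpa [detForm_sub_smul_apply, detForm_apply_right] using congr($h c))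

lemma ker_detForm_sub_smul_injective (hΔ : detForm a b c ≠ 0) :
    Function.Injective fun ξ : F ↦ LinearMap.ker (detForm a (b - ξ • c)) := by
  intro ξ₁ ξ₂ h
  have hmem : detForm a (b - ξ₂ • c) (b - ξ₁ • c) = 0 :=
    (SetLike.ext_iff.1 h (b - ξ₁ • c)).1 (detForm_apply_right _ _)
  have hξ : (ξ₂ - ξ₁) * detForm a b c = 0 := by
    rw [← hmem]; simp [detForm_apply, Matrix.det_fin_three]; ring
  exact (sub_eq_zero.1 ((mul_eq_zero.1 hξ).resolve_right hΔ)).symm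

lemma ker_eq_ker_detForm_sub_smul (hΔ : detForm a b c ≠ 0) {φ : Module.Dual F (Fin 3 → F)}
    (hφa : φ a = 0) (hφc : φ c ≠ 0) :
    LinearMap.ker φ = LinearMap.ker (detForm a (b - (φ b / φ c) • c)) := by
  ext t
  have key : detForm a b c * φ t = φ c * detForm a (b - (φ b / φ c) • c) t := by
    rw [detForm_mul_apply_of_apply_eq_zero φ hφa, detForm_sub_smul_apply]
    field_simp
    simp [detForm_apply, Matrix.det_fin_three]; ring
  rw [LinearMap.mem_ker, LinearMap.mem_ker, ← mul_right_inj' hΔ, mul_zero, key, mul_eq_zero,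
    or_iff_right hφc]

end Pencil

lemma secantCount_ker_detForm_sub_smul {F : Type} [Field F] [DecidableEq F] {S : Set (Pt F)}
    {a b c : Pt F} {T : Finset (Pt F)} (hT : ↑T = S \ {a, b, c}) (ha : a ∈ S)
    (hΔ : detForm a.rep b.rep c.rep ≠ 0) (hT0 : ∀ s ∈ T, detForm a.rep c.rep s.rep ≠ 0)
    {ξ : F} (hξ : ξ ≠ 0) :
    secantCount F S (LinearMap.ker (detForm a.rep (b.rep - ξ • c.rep))) =
      #{s ∈ T | detForm a.rep b.rep s.rep / detForm a.rep c.rep s.rep = ξ} + 1 := by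
  have hmemT (p : Pt F) : p ∈ T ↔ p ∈ S ∧ p ≠ a ∧ p ≠ b ∧ p ≠ c := by
    rw [← Finset.mem_coe, hT]; simp
  have hpoints : {p ∈ S | p.submodule ≤ LinearMap.ker (detForm a.rep (b.rep - ξ • c.rep))} =
      insert a ↑{s ∈ T | detForm a.rep b.rep s.rep / detForm a.rep c.rep s.rep = ξ} := by
    ext p
    simp only [submodule_le_ker_iff, detForm_sub_smul_apply, Set.mem_insert_iff, coe_filter,
      Set.mem_ofPred_eq, hmemT]
    by_cases hpa : p = a
    · simp [hpa, ha, detForm_apply_left]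
    by_cases hpb : p = b
    · subst hpb; simp [hpa, detForm_apply_right, detForm_apply_swap a.rep c.rep, hξ, hΔ]
    by_cases hpc : p = c
    · subst hpc; simp [hpa, detForm_apply_right, hΔ]
    simp only [hpa, hpb, hpc, false_or, ne_eq, not_false_eq_true, and_true]
    refine and_congr_right fun hp ↦ ?_
    rw [div_eq_iff (hT0 p ((hmemT p).2 ⟨hp, hpa, hpb, hpc⟩)), sub_eq_zero]
  have ha' : a ∉ T := fun h ↦ ((hmemT a).1 h).2.1 rfl
  rw [secantCount, hpoints, Set.ncard_insert_of_notMem (by simp [ha']), Set.ncard_coe_finset]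

namespace FiniteField

variable {K : Type*} [Field K] [Fintype K] [DecidableEq K]

theorem prod_univ_erase_zero : ∏ ξ ∈ univ.erase (0 : K), ξ = -1 := by
  have h := congrArg Units.val (prod_univ_units_id_eq_neg_one (K := K))
  rw [Units.coe_prod, Units.val_neg, Units.val_one] at h
  rw [← h]
  refine prod_bij' (fun ξ hξ ↦ Units.mk0 ξ (ne_of_mem_erase hξ)) (fun u _ ↦ u) ?_ ?_ ?_ ?_ ?_ <;>
    simp

theorem prod_eq_neg_div_of_card_filter {ι : Type*} {T : Finset ι} {κ : ι → K} {α β : K}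
    (hα : α ≠ 0) (hβ : β ≠ 0) (hαβ : α ≠ β) (hκ : ∀ i ∈ T, κ i ≠ 0)
    (hT : #T + 1 = Fintype.card K) (hκα : #{i ∈ T | κ i = α} = 0)
    (hκβ : #{i ∈ T | κ i = β} = 2) (hκne : ∀ ξ ≠ 0, ξ ≠ α → #{i ∈ T | κ i = ξ} ≠ 0) :
    ∏ i ∈ T, κ i = -β / α := by
  set U := ((univ.erase (0 : K)).erase α).erase β
  have hunits : univ.erase (0 : K) = insert α (insert β U) := by
    rw [insert_erase (by simp [hβ, hαβ.symm]), insert_erase (by simp [hα])]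
  have hαU : α ∉ insert β U := by simp [U, hαβ]
  have hβU : β ∉ U := by simp [U]
  have hmaps : ∀ i ∈ T, κ i ∈ univ.erase 0 := fun i hi ↦ by simp [hκ i hi]
  have hfiber : ∀ ξ ∈ U, #{i ∈ T | κ i = ξ} = 1 := by
    have hsum := card_eq_sum_card_fiberwise hmaps
    have hcard := congrArg Finset.card hunits
    rw [hunits, sum_insert hαU, sum_insert hβU, hκα, hκβ] at hsum
    rw [card_insert_of_notMem hαU, card_insert_of_notMem hβU, card_erase_of_mem (mem_univ 0),
      card_univ] at hcard
    have hle : ∀ ξ ∈ U, 1 ≤ #{i ∈ T | κ i = ξ} := fun ξ hξ ↦ by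
      simp only [U, mem_erase] at hξ
      exact Nat.one_le_iff_ne_zero.2 (hκne ξ hξ.2.2.1 hξ.2.1)
    have heq : ∑ ξ ∈ U, 1 = ∑ ξ ∈ U, #{i ∈ T | κ i = ξ} := by
      rw [sum_const, smul_eq_mul, mul_one]
      omega
    exact fun ξ hξ ↦ ((sum_eq_sum_iff_of_le hle).1 heq ξ hξ).symm
  have hwilson : α * (β * ∏ ξ ∈ U, ξ) = -1 := by
    have h := prod_univ_erase_zero (K := K)
    rwa [hunits, prod_insert hαU, prod_insert hβU] at h
  calc ∏ i ∈ T, κ i = ∏ ξ ∈ univ.erase 0, ξ ^ #{i ∈ T | κ i = ξ} := by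
        rw [← prod_fiberwise_of_maps_to hmaps]
        exact prod_congr rfl fun ξ _ ↦ prod_eq_pow_card fun i hi ↦ (mem_filter.1 hi).2
    _ = β ^ 2 * ∏ ξ ∈ U, ξ := by
        rw [hunits, prod_insert hαU, prod_insert hβU, hκα, hκβ, pow_zero, one_mul,
          prod_congr rfl fun ξ hξ ↦ by rw [hfiber ξ hξ, pow_one]]
    _ = -β / α := by
        rw [eq_div_iff hα]
        linear_combination β * hwilson

end FiniteField

lemma Finset.card_add_three_of_coe_eq_sdiff {α : Type*} {S : Set α} (hS : S.Finite)
    {T : Finset α} {a b c : α} (hT : ↑T = S \ {a, b, c}) (ha : a ∈ S) (hb : b ∈ S) (hc : c ∈ S)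
    (hab : a ≠ b) (hac : a ≠ c) (hbc : b ≠ c) : #T + 3 = S.ncard := by
  rw [← Set.ncard_coe_finset, hT, ← Set.ncard_eq_three.2 ⟨a, b, c, hab, hac, hbc, rfl⟩]
  exact Set.ncard_sdiff_add_ncard_of_subset (by simp [Set.insert_subset_iff, ha, hb, hc]) hS

section Frame

variable {F : Type} [Field F] [Fintype F]

structure S43Frame (S S' : Set (Pt F)) (f g : Pt F → ((Fin 3 → F) →ₗ[F] F)) : Prop where
  subset_S43 : S' ⊆ S43 F S
  tangent : ∀ x ∈ S', f x ≠ 0 ∧ x.submodule ≤ LinearMap.ker (f x) ∧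
    secantCount F S (LinearMap.ker (f x)) = 1
  trisecant : ∀ x ∈ S', g x ≠ 0 ∧ x.submodule ≤ LinearMap.ker (g x) ∧
    secantCount F S (LinearMap.ker (g x)) = 3
  bisecant : ∀ x ∈ S', ∀ y ∈ S', x ≠ y → secantCount F S (x.submodule ⊔ y.submodule) = 2

namespace S43Frame

variable {S S' : Set (Pt F)} {f g : Pt F → ((Fin 3 → F) →ₗ[F] F)} {a b c : Pt F}

lemma subset (H : S43Frame S S' f g) : S' ⊆ S := fun _ hx ↦ (H.subset_S43 hx).1

lemma detForm_ne_zero (H : S43Frame S S' f g) (ha : a ∈ S') (hb : b ∈ S') (hab : a ≠ b)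
    {t : Set (Pt F)} (hat : a ∈ t) (hbt : b ∈ t) {s : Pt F} (hs : s ∈ S \ t) :
    detForm a.rep b.rep s.rep ≠ 0 :=
  detForm_ne_zero_of_secantCount_eq_two hab (H.subset ha) (H.subset hb) (H.bisecant a ha b hb hab)
    hs.1 (fun h ↦ hs.2 (h ▸ hat)) (fun h ↦ hs.2 (h ▸ hbt))

lemma prod_detForm_ne_zero (H : S43Frame S S' f g) (ha : a ∈ S') (hb : b ∈ S') (hab : a ≠ b)
    {t : Set (Pt F)} (hat : a ∈ t) (hbt : b ∈ t) {T : Finset (Pt F)} (hT : ↑T = S \ t) :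
    ∏ s ∈ T, detForm a.rep b.rep s.rep ≠ 0 :=
  prod_ne_zero_iff.2 fun _ hs ↦ H.detForm_ne_zero ha hb hab hat hbt (hT ▸ mem_coe.2 hs)

lemma tangent_apply_self (H : S43Frame S S' f g) (ha : a ∈ S') : f a a.rep = 0 :=
  (submodule_le_ker_iff a _).1 (H.tangent a ha).2.1

lemma trisecant_apply_self (H : S43Frame S S' f g) (ha : a ∈ S') : g a a.rep = 0 :=
  (submodule_le_ker_iff a _).1 (H.trisecant a ha).2.1

lemma tangent_apply_ne_zero (H : S43Frame S S' f g) (ha : a ∈ S') (hb : b ∈ S') (hab : a ≠ b) :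
    f a b.rep ≠ 0 :=
  apply_ne_zero_of_secantCount_ne_two (H.tangent a ha).1 (by simp [(H.tangent a ha).2.2]) hab
    (H.tangent_apply_self ha) (H.bisecant a ha b hb hab)

lemma trisecant_apply_ne_zero (H : S43Frame S S' f g) (ha : a ∈ S') (hb : b ∈ S') (hab : a ≠ b) :
    g a b.rep ≠ 0 :=
  apply_ne_zero_of_secantCount_ne_two (H.trisecant a ha).1 (by simp [(H.trisecant a ha).2.2]) hab
    (H.trisecant_apply_self ha) (H.bisecant a ha b hb hab)

lemma eq_ker_tangent (H : S43Frame S S' f g) (ha : a ∈ S') {W : Submodule F (Fin 3 → F)}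
    (hW : IsLine F W) (haW : a.submodule ≤ W) (h1 : secantCount F S W = 1) :
    W = LinearMap.ker (f a) := by
  obtain ⟨W₀, hW₀⟩ := Set.ncard_eq_one.1 (H.subset_S43 ha).2.1
  have hunique (V : Submodule F (Fin 3 → F)) (hV : IsLine F V) (haV : a.submodule ≤ V)
      (hV1 : secantCount F S V = 1) : V = W₀ := by
    simpa [hW₀] using (show V ∈ {V | IsLine F V ∧ a.submodule ≤ V ∧ secantCount F S V = 1} from
      ⟨hV, haV, hV1⟩)
  rw [hunique W hW haW h1, hunique _ (isLine_ker (H.tangent a ha).1) (H.tangent a ha).2.1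
    (H.tangent a ha).2.2]

lemma detForm_ne_zero_of_ne (H : S43Frame S S' f g) (ha : a ∈ S') (hb : b ∈ S') (hc : c ∈ S')
    (hab : a ≠ b) (hac : a ≠ c) (hbc : b ≠ c) : detForm a.rep b.rep c.rep ≠ 0 :=
  H.detForm_ne_zero ha hb hab (t := {a, b}) (by simp) (by simp)
    ⟨H.subset hc, by simp [hac.symm, hbc.symm]⟩

lemma ker_tangent_eq (H : S43Frame S S' f g) (ha : a ∈ S') (hb : b ∈ S') (hc : c ∈ S')
    (hab : a ≠ b) (hac : a ≠ c) (hbc : b ≠ c) :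
    LinearMap.ker (f a) = LinearMap.ker (detForm a.rep (b.rep - (f a b.rep / f a c.rep) • c.rep)) :=
  ker_eq_ker_detForm_sub_smul (H.detForm_ne_zero_of_ne ha hb hc hab hac hbc)
    (H.tangent_apply_self ha) (H.tangent_apply_ne_zero ha hc hac)

lemma ker_trisecant_eq (H : S43Frame S S' f g) (ha : a ∈ S') (hb : b ∈ S') (hc : c ∈ S')
    (hab : a ≠ b) (hac : a ≠ c) (hbc : b ≠ c) :
    LinearMap.ker (g a) = LinearMap.ker (detForm a.rep (b.rep - (g a b.rep / g a c.rep) • c.rep)) :=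
  ker_eq_ker_detForm_sub_smul (H.detForm_ne_zero_of_ne ha hb hc hab hac hbc)
    (H.trisecant_apply_self ha) (H.trisecant_apply_ne_zero ha hc hac)

lemma tangent_div_ne_trisecant_div (H : S43Frame S S' f g) (ha : a ∈ S') (hb : b ∈ S')
    (hc : c ∈ S') (hab : a ≠ b) (hac : a ≠ c) (hbc : b ≠ c) :
    f a b.rep / f a c.rep ≠ g a b.rep / g a c.rep := fun h ↦ by
  have h3 := (H.trisecant a ha).2.2
  rw [H.ker_trisecant_eq ha hb hc hab hac hbc, ← h, ← H.ker_tangent_eq ha hb hc hab hac hbc,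
    (H.tangent a ha).2.2] at h3
  omega

theorem prod_detForm_mul_eq (H : S43Frame S S' f g) (hS : S.ncard = Fintype.card F + 2)
    (ha : a ∈ S') (hb : b ∈ S') (hc : c ∈ S') (hab : a ≠ b) (hac : a ≠ c) (hbc : b ≠ c)
    {T : Finset (Pt F)} (hT : ↑T = S \ {a, b, c}) :
    (∏ s ∈ T, detForm a.rep b.rep s.rep) * (f a b.rep * g a c.rep) =
      -(∏ s ∈ T, detForm a.rep c.rep s.rep) * (f a c.rep * g a b.rep) := by
  classical
  have hΔ := H.detForm_ne_zero_of_ne ha hb hc hab hac hbc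
  have hb0 (s : Pt F) (hs : s ∈ T) : detForm a.rep b.rep s.rep ≠ 0 :=
    H.detForm_ne_zero ha hb hab (by simp) (by simp) (hT ▸ mem_coe.2 hs)
  have hc0 (s : Pt F) (hs : s ∈ T) : detForm a.rep c.rep s.rep ≠ 0 :=
    H.detForm_ne_zero ha hc hac (by simp) (by simp) (hT ▸ mem_coe.2 hs)
  have hker_f := H.ker_tangent_eq ha hb hc hab hac hbc
  have hker_g := H.ker_trisecant_eq ha hb hc hab hac hbc
  have hcount (ξ : F) (hξ : ξ ≠ 0) := secantCount_ker_detForm_sub_smul hT (H.subset ha) hΔ hc0 hξ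
  have hfb := H.tangent_apply_ne_zero ha hb hab
  have hfc := H.tangent_apply_ne_zero ha hc hac
  have hgc := H.trisecant_apply_ne_zero ha hc hac
  have hα : f a b.rep / f a c.rep ≠ 0 := div_ne_zero hfb hfc
  have hβ : g a b.rep / g a c.rep ≠ 0 := div_ne_zero (H.trisecant_apply_ne_zero ha hb hab) hgc
  have hcountα := hcount _ hα
  have hcountβ := hcount _ hβ
  rw [← hker_f, (H.tangent a ha).2.2] at hcountα
  rw [← hker_g, (H.trisecant a ha).2.2] at hcountβ
  have hcard : #T + 1 = Fintype.card F := by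
    have := card_add_three_of_coe_eq_sdiff S.toFinite hT (H.subset ha) (H.subset hb)
      (H.subset hc) hab hac hbc
    omega
  have hfiber (ξ : F) (hξ : ξ ≠ 0) (hξα : ξ ≠ f a b.rep / f a c.rep) :
      #{s ∈ T | detForm a.rep b.rep s.rep / detForm a.rep c.rep s.rep = ξ} ≠ 0 := fun h0 ↦
    hξα <| ker_detForm_sub_smul_injective hΔ <| by
      dsimp only
      rw [← hker_f]
      exact H.eq_ker_tangent ha (isLine_ker (detForm_sub_smul_ne_zero hΔ ξ))
        ((submodule_le_ker_iff a _).2 (detForm_apply_left _ _))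
        (by rw [hcount ξ hξ, h0])
  have hprod := FiniteField.prod_eq_neg_div_of_card_filter hα hβ
    (H.tangent_div_ne_trisecant_div ha hb hc hab hac hbc)
    (fun s hs ↦ div_ne_zero (hb0 s hs) (hc0 s hs)) hcard (by omega) (by omega) hfiber
  rw [prod_div_distrib, div_eq_iff (prod_ne_zero_iff.2 hc0)] at hprod
  rw [hprod]
  field_simp

theorem tangent_mul_trisecant_eq_neg (H : S43Frame S S' f g) (hq : Odd (Fintype.card F))
    (hS : S.ncard = Fintype.card F + 2) {e u v : Pt F} (he : e ∈ S') (hu : u ∈ S') (hv : v ∈ S')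
    (hscale : ∀ x ∈ S', f x e.rep = f e x.rep ∧ g x e.rep = g e x.rep)
    (hue : u ≠ e) (hve : v ≠ e) (huv : u ≠ v) :
    f u v.rep * g v u.rep = -(g u v.rep * f v u.rep) := by
  obtain ⟨T, hT⟩ : ∃ T : Finset (Pt F), ↑T = S \ {u, v, e} :=
    ⟨_, (S \ {u, v, e}).toFinite.coe_toFinset⟩
  have hT₂ : ↑T = S \ {v, e, u} := by rw [hT, Set.insert_comm u, Set.pair_comm u]
  have hT₃ : ↑T = S \ {e, u, v} := by rw [hT₂, Set.insert_comm v, Set.pair_comm v]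
  have hTeven : Even #T := by
    have := card_add_three_of_coe_eq_sdiff S.toFinite hT (H.subset hu) (H.subset hv)
      (H.subset he) huv hue hve
    obtain ⟨k, hk⟩ := hq
    exact ⟨k, by omega⟩
  have h₁ := H.prod_detForm_mul_eq hS hu hv he huv hue hve hT
  have h₂ := H.prod_detForm_mul_eq hS hv he hu hve huv.symm hue.symm hT₂
  have h₃ := H.prod_detForm_mul_eq hS he hu hv hue.symm hve.symm huv hT₃
  rw [prod_detForm_swap hTeven u.rep v.rep] at h₂
  rw [prod_detForm_swap hTeven u.rep e.rep, prod_detForm_swap hTeven v.rep e.rep] at h₃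
  rw [(hscale u hu).1, (hscale u hu).2] at h₁
  rw [(hscale v hv).1, (hscale v hv).2] at h₂
  have hPuv := H.prod_detForm_ne_zero hu hv huv (by simp) (by simp) hT
  have hPue := H.prod_detForm_ne_zero hu he hue (by simp) (by simp) hT
  have hPve := H.prod_detForm_ne_zero hv he hve (by simp) (by simp) hT
  have hK : f e u.rep * f e v.rep * g e u.rep * g e v.rep ≠ 0 :=
    mul_ne_zero (mul_ne_zero (mul_ne_zero (H.tangent_apply_ne_zero he hu hue.symm)
      (H.tangent_apply_ne_zero he hv hve.symm)) (H.trisecant_apply_ne_zero he hu hue.symm))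
      (H.trisecant_apply_ne_zero he hv hve.symm)
  have key : (∏ s ∈ T, detForm u.rep v.rep s.rep) * (∏ s ∈ T, detForm u.rep e.rep s.rep) *
      (∏ s ∈ T, detForm v.rep e.rep s.rep) * (f e u.rep * f e v.rep * g e u.rep * g e v.rep) *
      (f u v.rep * g v u.rep + g u v.rep * f v u.rep) = 0 := by
    linear_combination congr($h₁ * $h₂ * $h₃)
  have hne := mul_ne_zero (mul_ne_zero (mul_ne_zero hPuv hPue) hPve) hK
  exact eq_neg_of_add_eq_zero_left ((mul_eq_zero.1 key).resolve_left hne)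

end S43Frame

end Frame

theorem det_g_b_identity_general
    (F : Type) [Field F] [Fintype F] (hq : Odd (Fintype.card F))
    (S : Set (Pt F)) (hS : S.ncard = Fintype.card F + 2)
    (S' : Set (Pt F)) (hS' : S' ⊆ S43 F S)
    (f g : Pt F → ((Fin 3 → F) →ₗ[F] F))
    (hf : ∀ x ∈ S', f x ≠ 0 ∧ x.submodule ≤ LinearMap.ker (f x) ∧
      secantCount F S (LinearMap.ker (f x)) = 1)
    (hg : ∀ x ∈ S', g x ≠ 0 ∧ x.submodule ≤ LinearMap.ker (g x) ∧
      secantCount F S (LinearMap.ker (g x)) = 3)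
    (hbi : ∀ x ∈ S', ∀ y ∈ S', x ≠ y → secantCount F S (x.submodule ⊔ y.submodule) = 2)
    (e : Pt F) (he : e ∈ S')
    (hscale : ∀ x ∈ S', f x e.rep = f e x.rep ∧ g x e.rep = g e x.rep)
    (w x y z : Pt F)
    (hw : w ∈ S' \ {e}) (hx : x ∈ S' \ {e}) (hy : y ∈ S' \ {e}) (hz : z ∈ S' \ {e})
    (hwx : w ≠ x) (hwy : w ≠ y) (hwz : w ≠ z) :
    (Matrix.of ![w.rep, x.rep, z.rep]).det * g w y.rep * g z w.rep *
        (f y w.rep * g x w.rep - g y w.rep * f x w.rep) =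
      (Matrix.of ![w.rep, x.rep, y.rep]).det * g w z.rep * g y w.rep *
        (f z w.rep * g x w.rep - g z w.rep * f x w.rep) := by
  have H : S43Frame S S' f g := ⟨hS', hf, hg, hbi⟩
  have hantisymm {t : Pt F} (ht : t ∈ S' \ {e}) (hwt : w ≠ t) :=
    H.tangent_mul_trisecant_eq_neg hq hS he hw.1 ht.1 hscale hw.2 ht.2 hwt
  have hb {t : Pt F} (ht : t ∈ S' \ {e}) (hwt : w ≠ t) :
      g w t.rep * g w x.rep * (f t w.rep * g x w.rep - g t w.rep * f x w.rep) =
        g t w.rep * g x w.rep * (g w t.rep * f w x.rep - f w t.rep * g w x.rep) := by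
    linear_combination g w x.rep * g x w.rep * hantisymm ht hwt -
      g w t.rep * g t w.rep * hantisymm hx hwx
  have hf_plucker := detForm_mul_apply_of_apply_eq_zero (f w) (H.tangent_apply_self hw.1)
    x.rep y.rep z.rep
  have hg_plucker := detForm_mul_apply_of_apply_eq_zero (g w) (H.trisecant_apply_self hw.1)
    x.rep y.rep z.rep
  rw [← detForm_apply, ← detForm_apply]
  refine mul_right_cancel₀ (H.trisecant_apply_ne_zero hw.1 hx.1 hwx) ?_
  linear_combination detForm w.rep x.rep z.rep * g z w.rep * hb hy hwy -
    detForm w.rep x.rep y.rep * g y w.rep * hb hz hwz -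
    g x w.rep * g y w.rep * g z w.rep * (f w x.rep * hg_plucker - g w x.rep * hf_plucker)

/-- For all pairwise distinct `w, x, y, z ∈ S' \ {e}`,
`det(w,x,z) g_w(y) g_z(w) b_{yx}(w) = det(w,x,y) g_w(z) g_y(w) b_{zx}(w)`. -/
theorem det_g_b_identity
    (F : Type) [Field F] [Fintype F] (hq : Odd (Fintype.card F))
    (S : Set (Pt F)) (hS : S.ncard = Fintype.card F + 2)
    (S' : Set (Pt F)) (hS' : S' ⊆ S43 F S)
    (f g : Pt F → ((Fin 3 → F) →ₗ[F] F))
    (hf : ∀ x ∈ S', f x ≠ 0 ∧ x.submodule ≤ LinearMap.ker (f x) ∧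
      secantCount F S (LinearMap.ker (f x)) = 1)
    (hg : ∀ x ∈ S', g x ≠ 0 ∧ x.submodule ≤ LinearMap.ker (g x) ∧
      secantCount F S (LinearMap.ker (g x)) = 3)
    (hbi : ∀ x ∈ S', ∀ y ∈ S', x ≠ y → secantCount F S (x.submodule ⊔ y.submodule) = 2)
    (e : Pt F) (he : e ∈ S')
    (hscale : ∀ x ∈ S', f x e.rep = f e x.rep ∧ g x e.rep = g e x.rep)
    (w x y z : Pt F)
    (hw : w ∈ S' \ {e}) (hx : x ∈ S' \ {e}) (hy : y ∈ S' \ {e}) (hz : z ∈ S' \ {e})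
    (hwx : w ≠ x) (hwy : w ≠ y) (hwz : w ≠ z) (hxy : x ≠ y) (hxz : x ≠ z) (hyz : y ≠ z) :
    (Matrix.of ![w.rep, x.rep, z.rep]).det * g w y.rep * g z w.rep *
        (f y w.rep * g x w.rep - g y w.rep * f x w.rep) =
      (Matrix.of ![w.rep, x.rep, y.rep]).det * g w z.rep * g y w.rep *
        (f z w.rep * g x w.rep - g z w.rep * f x w.rep) :=
  det_g_b_identity_general F hq S hS S' hS' f g hf hg hbi e he hscale w x y z hw hx hy hz hwx hwy
    hwz
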